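/- Let A be a 3×3 positive definite symmetric integer matrix with det(A) = 1. Then there exists P ∈ SL_3(ℤ) with A = Pᵀ P. -/

import Mathlib

/-!
Hermite's reduction. A shortest nonzero vector of a positive definite integral form is primitive,
so it is the first column of some `U ∈ SL₃(ℤ)`; after this change of basis the corner entry
`m = B 0 0` is the minimum of the form `Q`. Completing the square,
`m · Q(x, y) = (m x + B 0 1 y₀ + B 0 2 y₁)² + S(y)` with `S` a positive binary form of determinant
`m · det B = m`. By the binary Hermite bound some `y ≠ 0` has `3 S(y)² ≤ 4m`, and a suitable `x`
makes the square at most `m² / 4`, so minimality of `m` gives `3 m² ≤ 4 S(y)` and hence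
`27 m³ ≤ 64`, i.e. `m = 1`. A shear then splits `B` as `1 ⊕ S` with `S` unimodular, and the same
reduction in dimension two turns `S` into the identity.
-/

open Matrix
open scoped MatrixGroups

section Congruence

variable {n R : Type*} [Fintype n]

lemma dotProduct_transpose_mul_mul_mulVec [CommSemiring R] (A U : Matrix n n R) (x : n → R) :
    x ⬝ᵥ (Uᵀ * A * U) *ᵥ x = U *ᵥ x ⬝ᵥ A *ᵥ (U *ᵥ x) := by
  rw [← mulVec_mulVec, ← mulVec_mulVec, dotProduct_mulVec, vecMul_transpose]

lemma single_one_dotProduct_mulVec [DecidableEq n] [CommSemiring R] (A : Matrix n n R) (i : n) :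
    Pi.single i 1 ⬝ᵥ A *ᵥ Pi.single i 1 = A i i := by
  simp

lemma transpose_mul_mul_apply_self [DecidableEq n] [CommSemiring R] (A U : Matrix n n R) (i : n) :
    (Uᵀ * A * U) i i = U.col i ⬝ᵥ A *ᵥ U.col i := by
  rw [← single_one_dotProduct_mulVec (Uᵀ * A * U), dotProduct_transpose_mul_mul_mulVec,
    mulVec_single_one]

lemma diag_pos_of_forall_dotProduct_mulVec_pos [DecidableEq n] [CommSemiring R] [PartialOrder R]
    [Nontrivial R] {A : Matrix n n R} (hA : ∀ x ≠ 0, 0 < x ⬝ᵥ A *ᵥ x) (i : n) : 0 < A i i :=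
  single_one_dotProduct_mulVec A i ▸ hA _ (Pi.single_ne_zero_iff.mpr one_ne_zero)

lemma Matrix.IsSymm.transpose_mul_mul [CommSemiring R] {A : Matrix n n R} (hA : A.IsSymm)
    (U : Matrix n n R) : (Uᵀ * A * U).IsSymm := by
  rw [IsSymm, transpose_mul, transpose_mul, transpose_transpose, hA.eq, mul_assoc]

lemma Matrix.SpecialLinearGroup.mulVec_ne_zero [DecidableEq n] [CommRing R]
    (U : SpecialLinearGroup n R) {x : n → R} (hx : x ≠ 0) : (U : Matrix n n R) *ᵥ x ≠ 0 := by
  intro h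
  apply hx
  rw [← one_mulVec x, ← SpecialLinearGroup.coe_one, ← inv_mul_cancel U,
    SpecialLinearGroup.coe_mul, ← mulVec_mulVec, h, mulVec_zero]

variable [DecidableEq n] [CommRing R]

/-- Proper equivalence of forms in Gauss's sense. -/
def ProperlyEquiv (A B : Matrix n n R) : Prop :=
  ∃ U : SpecialLinearGroup n R, (↑U)ᵀ * A * (↑U : Matrix n n R) = B

namespace ProperlyEquiv

variable {A B C : Matrix n n R}

lemma of_transpose_mul_mul (U : SpecialLinearGroup n R) :
    ProperlyEquiv A ((↑U)ᵀ * A * (↑U : Matrix n n R)) :=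
  ⟨U, rfl⟩

lemma trans (hAB : ProperlyEquiv A B) (hBC : ProperlyEquiv B C) : ProperlyEquiv A C := by
  obtain ⟨U, rfl⟩ := hAB
  obtain ⟨V, rfl⟩ := hBC
  refine ⟨U * V, ?_⟩
  rw [Matrix.SpecialLinearGroup.coe_mul, transpose_mul]
  noncomm_ring

lemma symm (hAB : ProperlyEquiv A B) : ProperlyEquiv B A := by
  obtain ⟨U, rfl⟩ := hAB
  refine ⟨U⁻¹, ?_⟩
  have hU : (U : Matrix n n R) * (↑U⁻¹ : Matrix n n R) = 1 := by
    rw [← Matrix.SpecialLinearGroup.coe_mul, mul_inv_cancel, Matrix.SpecialLinearGroup.coe_one]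
  calc (↑U⁻¹)ᵀ * ((↑U)ᵀ * A * ↑U) * (↑U⁻¹ : Matrix n n R)
      = ((U : Matrix n n R) * ↑U⁻¹)ᵀ * A * ((U : Matrix n n R) * ↑U⁻¹) := by
        rw [transpose_mul]; noncomm_ring
    _ = A := by rw [hU, transpose_one, one_mul, mul_one]

lemma det_eq (hAB : ProperlyEquiv A B) : B.det = A.det := by
  obtain ⟨U, rfl⟩ := hAB
  rw [det_mul, det_mul, det_transpose, Matrix.SpecialLinearGroup.det_coe, one_mul, mul_one]

lemma isSymm (hAB : ProperlyEquiv A B) (hA : A.IsSymm) : B.IsSymm := by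
  obtain ⟨U, rfl⟩ := hAB
  exact hA.transpose_mul_mul _

lemma exists_dotProduct_mulVec_eq (hAB : ProperlyEquiv A B) {x : n → R} (hx : x ≠ 0) :
    ∃ y ≠ 0, y ⬝ᵥ A *ᵥ y = x ⬝ᵥ B *ᵥ x := by
  obtain ⟨U, rfl⟩ := hAB
  exact ⟨_, U.mulVec_ne_zero hx, (dotProduct_transpose_mul_mul_mulVec _ _ _).symm⟩

lemma pos [PartialOrder R] (hAB : ProperlyEquiv A B) (hA : ∀ x ≠ 0, 0 < x ⬝ᵥ A *ᵥ x) :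
    ∀ x ≠ 0, 0 < x ⬝ᵥ B *ᵥ x := fun x hx => by
  obtain ⟨y, hy, hxy⟩ := hAB.exists_dotProduct_mulVec_eq hx
  exact hxy ▸ hA y hy

end ProperlyEquiv

lemma exists_properlyEquiv_corner_le_of_col_eq [Preorder R] {A : Matrix n n R} {x : n → R}
    (hx : ∀ y ≠ 0, x ⬝ᵥ A *ᵥ x ≤ y ⬝ᵥ A *ᵥ y) (U : SpecialLinearGroup n R) {i : n}
    (hUx : (U : Matrix n n R).col i = x) :
    ∃ B, ProperlyEquiv A B ∧ ∀ y ≠ 0, B i i ≤ y ⬝ᵥ B *ᵥ y := by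
  refine ⟨_, .of_transpose_mul_mul U, fun y hy => ?_⟩
  rw [transpose_mul_mul_apply_self, hUx, dotProduct_transpose_mul_mul_mulVec]
  exact hx _ (U.mulVec_ne_zero hy)

end Congruence

section IntegralForms

variable {n : Type*} [Fintype n]

lemma exists_forall_ne_zero_dotProduct_mulVec_le [Nonempty n] {A : Matrix n n ℤ}
    (hA : ∀ x ≠ 0, 0 < x ⬝ᵥ A *ᵥ x) :
    ∃ x ≠ 0, ∀ y ≠ 0, x ⬝ᵥ A *ᵥ x ≤ y ⬝ᵥ A *ᵥ y := by
  classical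
  obtain ⟨i⟩ := ‹Nonempty n›
  obtain ⟨m, ⟨x, hx, rfl⟩, hmin⟩ := Int.exists_least_of_bdd
    (P := fun m => ∃ x ≠ 0, x ⬝ᵥ A *ᵥ x = m)
    ⟨0, fun _ ⟨x, hx, hm⟩ => hm ▸ (hA x hx).le⟩
    ⟨_, Pi.single i 1, by simp, rfl⟩
  exact ⟨x, hx, fun y hy => hmin _ ⟨y, hy, rfl⟩⟩

lemma isUnit_of_forall_dvd_of_forall_le {A : Matrix n n ℤ} (hA : ∀ x ≠ 0, 0 < x ⬝ᵥ A *ᵥ x)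
    {x : n → ℤ} (hx : x ≠ 0) (hmin : ∀ y ≠ 0, x ⬝ᵥ A *ᵥ x ≤ y ⬝ᵥ A *ᵥ y) {d : ℤ}
    (hd : ∀ i, d ∣ x i) : IsUnit d := by
  choose y hy using hd
  have hxy : x = d • y := funext hy
  have hy0 : y ≠ 0 := by rintro rfl; simp [hxy] at hx
  have hq : x ⬝ᵥ A *ᵥ x = d ^ 2 * (y ⬝ᵥ A *ᵥ y) := by
    rw [hxy, mulVec_smul, dotProduct_smul, smul_dotProduct, smul_eq_mul, smul_eq_mul]; ring
  have hpos := hA x hx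
  have hle := hmin y hy0
  have hd0 : d ≠ 0 := by rintro rfl; rw [hq] at hpos; simp at hpos
  have hd2 : d ^ 2 ≤ 1 := by nlinarith
  have hd : -1 ≤ d ∧ d ≤ 1 := ⟨by nlinarith, by nlinarith⟩
  rw [Int.isUnit_iff]
  omega

end IntegralForms

lemma exists_two_mul_abs_sub_mul_le (b m : ℤ) (hm : 0 < m) : ∃ k : ℤ, 2 * |b - k * m| ≤ m := by
  have h1 := Int.emod_nonneg b hm.ne'
  have h2 := Int.emod_lt_of_pos b hm
  have h3 := Int.mul_ediv_add_emod b m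
  by_cases h : 2 * (b % m) ≤ m
  · exact ⟨b / m, by rw [abs_of_nonneg] <;> nlinarith⟩
  · refine ⟨b / m + 1, ?_⟩
    rw [abs_of_nonpos] <;> nlinarith

lemma exists_SL_col_zero_eq_fin_two (x : Fin 2 → ℤ) (hx : IsCoprime (x 0) (x 1)) :
    ∃ U : SL(2, ℤ), (U : Matrix (Fin 2) (Fin 2) ℤ).col 0 = x := by
  obtain ⟨p, q, hpq⟩ := hx
  refine ⟨⟨!![x 0, -q; x 1, p], by rw [det_fin_two_of]; linear_combination hpq⟩, ?_⟩
  ext i; fin_cases i <;> rfl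

lemma exists_SL_col_zero_eq_fin_three (x : Fin 3 → ℤ) (hx : IsCoprime (gcd (x 0) (x 1)) (x 2)) :
    ∃ U : SL(3, ℤ), (U : Matrix (Fin 3) (Fin 3) ℤ).col 0 = x := by
  obtain ⟨a, b, ha, hb, hab⟩ := extract_gcd (x 0) (x 1)
  obtain ⟨u, v, huv⟩ := isRelPrime_iff_isCoprime.mp (gcd_isUnit_iff_isRelPrime.mp hab)
  obtain ⟨s, t, hst⟩ := hx
  refine ⟨⟨!![x 0, -v, -(t * a); x 1, u, -(t * b); x 2, 0, s], ?_⟩, ?_⟩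
  · simp only [det_fin_three, of_apply, cons_val', cons_val_zero, cons_val_one, cons_val,
      cons_val_fin_one]
    linear_combination s * u * ha + s * v * hb + (u * a + v * b) * hst + huv
  · ext i; fin_cases i <;> rfl

lemma exists_properlyEquiv_corner_le_fin_two {C : Matrix (Fin 2) (Fin 2) ℤ}
    (hC : ∀ x ≠ 0, 0 < x ⬝ᵥ C *ᵥ x) :
    ∃ B, ProperlyEquiv C B ∧ ∀ y ≠ 0, B 0 0 ≤ y ⬝ᵥ B *ᵥ y := by
  obtain ⟨x, hx, hmin⟩ := exists_forall_ne_zero_dotProduct_mulVec_le hC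
  have hprim : IsCoprime (x 0) (x 1) := isRelPrime_iff_isCoprime.mp fun d h0 h1 =>
    isUnit_of_forall_dvd_of_forall_le hC hx hmin (by intro i; fin_cases i <;> assumption)
  obtain ⟨U, hU⟩ := exists_SL_col_zero_eq_fin_two x hprim
  exact exists_properlyEquiv_corner_le_of_col_eq hmin U hU

lemma exists_properlyEquiv_corner_le_fin_three {A : Matrix (Fin 3) (Fin 3) ℤ}
    (hA : ∀ x ≠ 0, 0 < x ⬝ᵥ A *ᵥ x) :
    ∃ B, ProperlyEquiv A B ∧ ∀ y ≠ 0, B 0 0 ≤ y ⬝ᵥ B *ᵥ y := by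
  obtain ⟨x, hx, hmin⟩ := exists_forall_ne_zero_dotProduct_mulVec_le hA
  have hprim : IsCoprime (gcd (x 0) (x 1)) (x 2) := isRelPrime_iff_isCoprime.mp fun d h01 h2 =>
    isUnit_of_forall_dvd_of_forall_le hA hx hmin (by
      intro i
      fin_cases i
      exacts [h01.trans (gcd_dvd_left _ _), h01.trans (gcd_dvd_right _ _), h2])
  obtain ⟨U, hU⟩ := exists_SL_col_zero_eq_fin_three x hprim
  exact exists_properlyEquiv_corner_le_of_col_eq hmin U hU

lemma exists_properlyEquiv_reduced_fin_two {C : Matrix (Fin 2) (Fin 2) ℤ} (hCs : C.IsSymm)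
    (hC : ∀ x ≠ 0, 0 < x ⬝ᵥ C *ᵥ x) :
    ∃ m b c : ℤ, ProperlyEquiv C !![m, b; b, c] ∧ 0 < m ∧ 2 * |b| ≤ m ∧ m ≤ c := by
  obtain ⟨B, hCB, hmin⟩ := exists_properlyEquiv_corner_le_fin_two hC
  have h10 : B 1 0 = B 0 1 := (hCB.isSymm hCs).apply 0 1
  have hm : 0 < B 0 0 := diag_pos_of_forall_dotProduct_mulVec_pos (hCB.pos hC) 0
  obtain ⟨k, hk⟩ := exists_two_mul_abs_sub_mul_le (B 0 1) (B 0 0) hm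
  have hc : B 0 0 ≤ B 0 0 * k ^ 2 - 2 * k * B 0 1 + B 1 1 := by
    have := hmin ![-k, 1] (by simp)
    simp only [dotProduct, mulVec, Fin.sum_univ_two, cons_val_zero, cons_val_one, cons_val_fin_one,
      h10] at this
    linarith
  refine ⟨B 0 0, B 0 1 - k * B 0 0, _, hCB.trans ⟨⟨!![1, -k; 0, 1], by simp⟩, ?_⟩, hm, hk, hc⟩
  ext i j
  fin_cases i <;> fin_cases j <;> simp [mul_apply, Fin.sum_univ_two, h10] <;> ring

lemma hermite_bound_fin_two {C : Matrix (Fin 2) (Fin 2) ℤ} (hCs : C.IsSymm)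
    (hC : ∀ x ≠ 0, 0 < x ⬝ᵥ C *ᵥ x) :
    ∃ y ≠ 0, 3 * (y ⬝ᵥ C *ᵥ y) ^ 2 ≤ 4 * C.det := by
  obtain ⟨m, b, c, hC', hm, hb, hmc⟩ := exists_properlyEquiv_reduced_fin_two hCs hC
  obtain ⟨y, hy, hym⟩ := hC'.exists_dotProduct_mulVec_eq (x := Pi.single 0 1) (by simp)
  have hym' : y ⬝ᵥ C *ᵥ y = m := by rw [hym, single_one_dotProduct_mulVec]; rfl
  have hdet : C.det = m * c - b * b := by rw [← hC'.det_eq, det_fin_two_of]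
  refine ⟨y, hy, ?_⟩
  rw [hym', hdet]
  nlinarith [sq_abs b, abs_nonneg b]

lemma properlyEquiv_one_fin_two {C : Matrix (Fin 2) (Fin 2) ℤ} (hCs : C.IsSymm)
    (hC : ∀ x ≠ 0, 0 < x ⬝ᵥ C *ᵥ x) (hdet : C.det = 1) : ProperlyEquiv C 1 := by
  obtain ⟨m, b, c, hC', hm, hb, hmc⟩ := exists_properlyEquiv_reduced_fin_two hCs hC
  have hdet' : m * c - b * b = 1 := by rw [← det_fin_two_of, hC'.det_eq, hdet]
  have hm1 : m = 1 := by nlinarith [sq_abs b, abs_nonneg b]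
  have hb0 : b = 0 := abs_eq_zero.mp (by have := abs_nonneg b; omega)
  have hc1 : c = 1 := by subst hm1 hb0; linarith
  rwa [hm1, hb0, hc1, ← one_fin_two] at hC'

section SchurComplement

variable {R : Type*} [CommRing R] {B : Matrix (Fin 3) (Fin 3) R}

/-- `B 0 0` times the Schur complement of the corner entry `B 0 0`; the factor keeps it integral. -/
def scaledSchurComplement (B : Matrix (Fin 3) (Fin 3) R) : Matrix (Fin 2) (Fin 2) R :=
  of fun i j => B 0 0 * B i.succ j.succ - B 0 i.succ * B 0 j.succ

lemma scaledSchurComplement_isSymm (hB : B.IsSymm) : (scaledSchurComplement B).IsSymm := by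
  ext i j
  simp only [scaledSchurComplement, transpose_apply, of_apply, hB.apply i.succ j.succ]
  ring

lemma det_scaledSchurComplement (hB : B.IsSymm) :
    (scaledSchurComplement B).det = B 0 0 * B.det := by
  rw [det_fin_three, det_fin_two]
  simp only [scaledSchurComplement, of_apply, Fin.succ_zero_eq_one, Fin.succ_one_eq_two,
    hB.apply 1 0, hB.apply 2 0, hB.apply 2 1]
  ring

lemma mul_dotProduct_mulVec_vecCons (hB : B.IsSymm) (x : R) (y : Fin 2 → R) :
    B 0 0 * (vecCons x y ⬝ᵥ B *ᵥ vecCons x y) =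
      (B 0 0 * x + B 0 1 * y 0 + B 0 2 * y 1) ^ 2 + y ⬝ᵥ scaledSchurComplement B *ᵥ y := by
  simp only [scaledSchurComplement, dotProduct, mulVec, Fin.sum_univ_three, Fin.sum_univ_two,
    of_apply, cons_val_zero, cons_val_one, cons_val, Fin.succ_zero_eq_one, Fin.succ_one_eq_two,
    hB.apply 1 0, hB.apply 2 0, hB.apply 2 1]
  ring

lemma scaledSchurComplement_pos [LinearOrder R] [IsStrictOrderedRing R] (hB : B.IsSymm)
    (hpos : ∀ x ≠ 0, 0 < x ⬝ᵥ B *ᵥ x) : ∀ y ≠ 0, 0 < y ⬝ᵥ scaledSchurComplement B *ᵥ y := by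
  intro y hy
  have h00 : 0 < B 0 0 := diag_pos_of_forall_dotProduct_mulVec_pos hpos 0
  -- the first coordinate is chosen to make the square vanish
  have hv : vecCons (-(B 0 1 * y 0 + B 0 2 * y 1)) (B 0 0 • y) ≠ 0 := by
    simp [cons_eq_zero_iff, h00.ne', hy]
  have key := mul_dotProduct_mulVec_vecCons hB (-(B 0 1 * y 0 + B 0 2 * y 1)) (B 0 0 • y)
  rw [mulVec_smul, dotProduct_smul, smul_dotProduct] at key
  simp only [smul_eq_mul, Pi.smul_apply] at key
  have h := mul_pos h00 (hpos _ hv)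
  rw [key, show B 0 0 * -(B 0 1 * y 0 + B 0 2 * y 1) + B 0 1 * (B 0 0 * y 0)
      + B 0 2 * (B 0 0 * y 1) = 0 by ring, zero_pow two_ne_zero, zero_add] at h
  exact pos_of_mul_pos_right (pos_of_mul_pos_right h h00.le) h00.le

end SchurComplement

lemma hermite_bound_fin_three {B : Matrix (Fin 3) (Fin 3) ℤ} (hB : B.IsSymm)
    (hpos : ∀ x ≠ 0, 0 < x ⬝ᵥ B *ᵥ x) (hmin : ∀ x ≠ 0, B 0 0 ≤ x ⬝ᵥ B *ᵥ x) :
    27 * B 0 0 ^ 3 ≤ 64 * B.det := by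
  set m := B 0 0
  have hm : 0 < m := diag_pos_of_forall_dotProduct_mulVec_pos hpos 0
  obtain ⟨y, hy, hyS⟩ := hermite_bound_fin_two (scaledSchurComplement_isSymm hB)
    (scaledSchurComplement_pos hB hpos)
  rw [det_scaledSchurComplement hB] at hyS
  set q := y ⬝ᵥ scaledSchurComplement B *ᵥ y
  obtain ⟨k, hk⟩ := exists_two_mul_abs_sub_mul_le (B 0 1 * y 0 + B 0 2 * y 1) m hm
  set r := B 0 1 * y 0 + B 0 2 * y 1 - k * m
  have key := mul_dotProduct_mulVec_vecCons hB (-k) y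
  rw [show m * -k + B 0 1 * y 0 + B 0 2 * y 1 = r by ring] at key
  have hv := hmin (vecCons (-k) y) (by simp [cons_eq_zero_iff, hy])
  have hr : 4 * r ^ 2 ≤ m ^ 2 := by nlinarith [sq_abs r, abs_nonneg r]
  have hq : 3 * m ^ 2 ≤ 4 * q := by nlinarith
  have h4 : m * (27 * m ^ 3) ≤ m * (64 * B.det) := by nlinarith
  exact le_of_mul_le_mul_left h4 hm

section BlockDiagOne

variable {R : Type*} [CommRing R]

def blockDiagOne (W : Matrix (Fin 2) (Fin 2) R) : Matrix (Fin 3) (Fin 3) R :=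
  !![1, 0, 0; 0, W 0 0, W 0 1; 0, W 1 0, W 1 1]

lemma blockDiagOne_mul (C D : Matrix (Fin 2) (Fin 2) R) :
    blockDiagOne C * blockDiagOne D = blockDiagOne (C * D) := by
  ext i j
  fin_cases i <;> fin_cases j <;> simp [blockDiagOne, mul_apply, Fin.sum_univ_succ]

lemma transpose_blockDiagOne (W : Matrix (Fin 2) (Fin 2) R) :
    (blockDiagOne W)ᵀ = blockDiagOne Wᵀ := by
  ext i j
  fin_cases i <;> fin_cases j <;> rfl

lemma blockDiagOne_one : blockDiagOne (1 : Matrix (Fin 2) (Fin 2) R) = 1 := by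
  ext i j
  fin_cases i <;> fin_cases j <;> rfl

lemma det_blockDiagOne (W : Matrix (Fin 2) (Fin 2) R) : (blockDiagOne W).det = W.det := by
  simp [blockDiagOne, det_fin_three, det_fin_two]

lemma ProperlyEquiv.map_blockDiagOne {C D : Matrix (Fin 2) (Fin 2) R} (h : ProperlyEquiv C D) :
    ProperlyEquiv (blockDiagOne C) (blockDiagOne D) := by
  obtain ⟨W, rfl⟩ := h
  refine ⟨⟨blockDiagOne W, by rw [det_blockDiagOne, Matrix.SpecialLinearGroup.det_coe]⟩, ?_⟩
  simp only [transpose_blockDiagOne, blockDiagOne_mul]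

lemma properlyEquiv_blockDiagOne_scaledSchurComplement {B : Matrix (Fin 3) (Fin 3) R}
    (hB : B.IsSymm) (h00 : B 0 0 = 1) :
    ProperlyEquiv B (blockDiagOne (scaledSchurComplement B)) := by
  refine ⟨⟨!![1, -B 0 1, -B 0 2; 0, 1, 0; 0, 0, 1], by simp [det_fin_three]⟩, ?_⟩
  ext i j
  fin_cases i <;> fin_cases j <;>
    simp [blockDiagOne, scaledSchurComplement, mul_apply, Fin.sum_univ_three, h00,
      hB.apply 1 0, hB.apply 2 0, hB.apply 2 1] <;> ring

end BlockDiagOne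

lemma properlyEquiv_one_of_corner_eq_one {B : Matrix (Fin 3) (Fin 3) ℤ} (hB : B.IsSymm)
    (hpos : ∀ x ≠ 0, 0 < x ⬝ᵥ B *ᵥ x) (hdet : B.det = 1) (h00 : B 0 0 = 1) :
    ProperlyEquiv B 1 := by
  have hS : ProperlyEquiv (scaledSchurComplement B) 1 :=
    properlyEquiv_one_fin_two (scaledSchurComplement_isSymm hB) (scaledSchurComplement_pos hB hpos)
      (by rw [det_scaledSchurComplement hB, h00, hdet, one_mul])
  simpa [blockDiagOne_one] using
    (properlyEquiv_blockDiagOne_scaledSchurComplement hB h00).trans hS.map_blockDiagOne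

theorem stmt_3 (A : Matrix (Fin 3) (Fin 3) ℤ)
    (hsymm : A.IsSymm)
    (hpos : ∀ x : Fin 3 → ℤ, x ≠ 0 → 0 < dotProduct x (A.mulVec x))
    (hdet : A.det = 1) :
    ∃ P : Matrix (Fin 3) (Fin 3) ℤ, P.det = 1 ∧ A = P.transpose * P := by
  obtain ⟨B, hAB, hmin⟩ := exists_properlyEquiv_corner_le_fin_three hpos
  have hB := hAB.isSymm hsymm
  have hBpos := hAB.pos hpos
  have hBdet : B.det = 1 := by rw [hAB.det_eq, hdet]
  have h00 : B 0 0 = 1 := by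
    have hcube : B 0 0 ^ 3 < 2 ^ 3 := by
      have := hermite_bound_fin_three hB hBpos hmin
      omega
    have := lt_of_pow_lt_pow_left₀ 3 zero_le_two hcube
    have := diag_pos_of_forall_dotProduct_mulVec_pos hBpos 0
    omega
  obtain ⟨P, hP⟩ := (hAB.trans (properlyEquiv_one_of_corner_eq_one hB hBpos hBdet h00)).symm
  exact ⟨P, P.det_coe, by rw [← hP, mul_one]⟩
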